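/- Suppose G_L is connected, Ω is a nonempty finite set of routings, and ρ : E_P → ℝ satisfies 0 ≤ ρ e ≤ 1 for all e. Then there exist a routing M* ∈ Ω and a nonempty set T of spanning trees of G_L such that ∏_{e ∈ ⋂_{τ∈T} E_P(τ,M*)} (1 − ρ e) = max_{M ∈ Ω} ∏_{e ∈ R(M)} (1 − ρ e); that is, there exists a protecting spanning tree set together with a routing whose survivable probability equals the maximal survivable probability of the cross-layer network. (Paper's Theorem 1.) -/

import Mathlib

/-- A spanning tree of the logical network `G`. -/
def IsSpanningTree {V_L : Type*} (G τ : SimpleGraph V_L) : Prop :=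
  τ ≤ G ∧ τ.Connected ∧ τ.IsAcyclic

/-- The surviving graph `G∖e` after failure of the physical link `e`, under routing `M`. -/
def survivingGraph {V_L E_P : Type*} (G : SimpleGraph V_L) (M : Sym2 V_L → Set E_P)
    (e : E_P) : SimpleGraph V_L :=
  SimpleGraph.fromEdgeSet {μ | μ ∈ G.edgeSet ∧ e ∉ M μ}

/-- `E_P(τ,M)`: the physical links utilized by the routing of the branches of `τ`. -/
def utilizedLinks {V_L E_P : Type*} (M : Sym2 V_L → Set E_P) (τ : SimpleGraph V_L) :
    Set E_P :=
  ⋃ μ ∈ τ.edgeSet, M μ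

/-- `R(M)`: the physical links whose individual failure disconnects the logical network. -/
def disconnectingLinks {V_L E_P : Type*} (G : SimpleGraph V_L)
    (M : Sym2 V_L → Set E_P) : Set E_P :=
  {e | ¬ (survivingGraph G M e).Connected}

/-- The survivable probability of a set `S` of physical links: `∏_{e ∈ S} (1 - ρ e)`. -/
noncomputable def survProb {E_P : Type*} [Fintype E_P] (ρ : E_P → ℝ) (S : Set E_P) : ℝ :=
  ∏ e ∈ (Set.toFinite S).toFinset, (1 - ρ e)

/-!
A physical link `e` disconnects the logical network exactly when it is used by every spanning
tree: the surviving graph is connected iff it contains a spanning tree of `G_L`, i.e. iff some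
spanning tree avoids `e`. Hence `R(M)` is the intersection of `E_P(τ, M)` over the set of all
spanning trees, and it suffices to take that set together with a routing maximising the
survivable probability of `R(M)`.
-/

open SimpleGraph

section SpanningTrees

variable {V_L E_P : Type*} {G : SimpleGraph V_L}

lemma exists_isSpanningTree (hG : G.Connected) : ∃ τ, IsSpanningTree G τ := by
  obtain ⟨τ, hτG, hτ⟩ := hG.exists_isTree_le
  exact ⟨τ, hτG, hτ.connected, hτ.isAcyclic⟩

lemma le_survivingGraph_iff {M : Sym2 V_L → Set E_P} {e : E_P} {τ : SimpleGraph V_L} :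
    τ ≤ survivingGraph G M e ↔ τ ≤ G ∧ e ∉ utilizedLinks M τ := by
  simp only [← edgeSet_subset_edgeSet, survivingGraph, edgeSet_fromEdgeSet, utilizedLinks,
    Set.mem_iUnion₂, not_exists]
  constructor
  · intro h
    exact ⟨fun μ hμ => (h hμ).1.1, fun μ hμ => (h hμ).1.2⟩
  · rintro ⟨hτG, he⟩ μ hμ
    exact ⟨⟨hτG hμ, he μ hμ⟩, τ.not_isDiag_of_mem_edgeSet hμ⟩

lemma survivingGraph_connected_iff {M : Sym2 V_L → Set E_P} {e : E_P} :
    (survivingGraph G M e).Connected ↔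
      ∃ τ, IsSpanningTree G τ ∧ e ∉ utilizedLinks M τ := by
  constructor
  · intro h
    obtain ⟨τ, hτ, hτe, hτacyc⟩ := exists_isSpanningTree h
    obtain ⟨hτG, he⟩ := le_survivingGraph_iff.mp hτ
    exact ⟨τ, ⟨hτG, hτe, hτacyc⟩, he⟩
  · rintro ⟨τ, ⟨hτG, hτ, -⟩, he⟩
    exact hτ.mono (le_survivingGraph_iff.mpr ⟨hτG, he⟩)

lemma disconnectingLinks_eq_iInter_utilizedLinks (M : Sym2 V_L → Set E_P) :
    disconnectingLinks G M = ⋂ τ ∈ {τ | IsSpanningTree G τ}, utilizedLinks M τ := by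
  ext e
  simp [disconnectingLinks, survivingGraph_connected_iff]

end SpanningTrees

theorem exists_base_protecting_spanning_tree_set_general
    {V_L E_P : Type*} [Fintype E_P]
    (G_L : SimpleGraph V_L) (hG : G_L.Connected)
    (Ω : Finset (Sym2 V_L → Set E_P)) (hΩ : Ω.Nonempty)
    (ρ : E_P → ℝ) :
    ∃ M ∈ Ω, ∃ T : Set (SimpleGraph V_L), T.Nonempty ∧
      (∀ τ ∈ T, IsSpanningTree G_L τ) ∧
      survProb ρ (⋂ τ ∈ T, utilizedLinks M τ) =
        Ω.sup' hΩ (fun M' => survProb ρ (disconnectingLinks G_L M')) := by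
  obtain ⟨M, hM, hM_max⟩ := Finset.exists_mem_eq_sup' hΩ
    (fun M' => survProb ρ (disconnectingLinks G_L M'))
  refine ⟨M, hM, {τ | IsSpanningTree G_L τ}, exists_isSpanningTree hG, fun τ hτ => hτ, ?_⟩
  rw [← disconnectingLinks_eq_iInter_utilizedLinks, hM_max]

/-- Paper's Theorem 1: there exists a (nonempty) protecting spanning tree set, together
with a routing `M* ∈ Ω`, whose survivable probability equals the maximal survivable
probability of the cross-layer network. -/
theorem exists_base_protecting_spanning_tree_set
    {V_L E_P : Type*} [Fintype V_L] [Fintype E_P]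
    (G_L : SimpleGraph V_L) (hG : G_L.Connected)
    (Ω : Finset (Sym2 V_L → Set E_P)) (hΩ : Ω.Nonempty)
    (ρ : E_P → ℝ) (hρ : ∀ e, 0 ≤ ρ e ∧ ρ e ≤ 1) :
    ∃ M ∈ Ω, ∃ T : Set (SimpleGraph V_L), T.Nonempty ∧
      (∀ τ ∈ T, IsSpanningTree G_L τ) ∧
      survProb ρ (⋂ τ ∈ T, utilizedLinks M τ) =
        Ω.sup' hΩ (fun M' => survProb ρ (disconnectingLinks G_L M')) :=
  exists_base_protecting_spanning_tree_set_general G_L hG Ω hΩ ρ
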